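/- arXiv:1807.06256 — 2 statements merged into one kernel-verified Lean document; each statement's English description precedes it below -/
import Mathlib

section
/- Let p be a real polynomial in N variables, written as p = Σ_m α_m Π_{i∈m} x_i over its monomials m, with C = Σ_m |α_m| the sum of the absolute values of its coefficients. Let A_1, …, A_N be real matrices of the same dimensions, and let B = p(A_1, …, A_N) be the matrix obtained by substituting A_i for x_i and using the entrywise (Hadamard) product as multiplication. Then γ₂(B) ≤ C · (max(1, max_{i∈[N]} γ₂(A_i)))^{deg p}. -/
open MvPolynomial

noncomputable section

/-- Real encoding of a bit: `true ↦ 1`, `false ↦ 0`. -/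
def bReal (b : Bool) : ℝ := if b then 1 else 0

/-- `±1` encoding of a bit: `true ↦ 1`, `false ↦ -1`. -/
def bPM (b : Bool) : ℝ := if b then 1 else -1

/-- Hamming weight of a Boolean string. -/
def wt {ι : Type*} [Fintype ι] (x : ι → Bool) : ℕ :=
  (Finset.univ.filter (fun i => x i = true)).card

/-- Approximate degree of a total Boolean function: the least degree of a real polynomial
approximating the function pointwise to error `1/3` on the Boolean cube. -/
noncomputable def adeg {ι : Type*} (f : (ι → Bool) → Bool) : ℕ :=
  sInf {d : ℕ | ∃ p : MvPolynomial ι ℝ, p.totalDegree ≤ d ∧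
    ∀ x : ι → Bool, |MvPolynomial.eval (fun i => bReal (x i)) p - bReal (f x)| ≤ 1/3}

/-- Bounded approximate degree of a partial Boolean function (`none` = undefined `*`):
the polynomial must be in `[0,1]` on all Boolean inputs and approximate the function
to error `1/3` on the domain. -/
noncomputable def bdeg {ι : Type*} (h : (ι → Bool) → Option Bool) : ℕ :=
  sInf {d : ℕ | ∃ p : MvPolynomial ι ℝ, p.totalDegree ≤ d ∧
    (∀ x : ι → Bool, MvPolynomial.eval (fun i => bReal (x i)) p ∈ Set.Icc (0:ℝ) 1) ∧
    ∀ (x : ι → Bool) (b : Bool), h x = some b →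
      |MvPolynomial.eval (fun i => bReal (x i)) p - bReal b| ≤ 1/3}

/-- `OR_n ∘ f`: the OR of `n` disjoint copies of `f`. -/
def orComp (n m : ℕ) (f : (Fin m → Bool) → Bool) : (Fin n × Fin m → Bool) → Bool :=
  fun x => decide (∃ i : Fin n, f (fun j => x (i, j)) = true)

/-- `g ∘ f`: block composition of Boolean functions. -/
def gComp {n m : ℕ} (g : (Fin n → Bool) → Bool) (f : (Fin m → Bool) → Bool) :
    (Fin n × Fin m → Bool) → Bool :=
  fun x => g (fun i => f (fun j => x (i, j)))

/-- A Boolean function is symmetric if it depends only on the Hamming weight. -/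
def IsSymmetricBF {n : ℕ} (g : (Fin n → Bool) → Bool) : Prop :=
  ∀ x y : Fin n → Bool, wt x = wt y → g x = g y

/-- `PrOR_n`: the promise-OR partial function (weight 0 ↦ 0, weight 1 ↦ 1, else `*`). -/
def prOR (n : ℕ) : (Fin n → Bool) → Option Bool :=
  fun x => if wt x = 0 then some false else if wt x = 1 then some true else none

/-- `PrOR_n ∘ f` for a total inner function `f`. -/
def prorComp (n m : ℕ) (f : (Fin m → Bool) → Bool) : (Fin n × Fin m → Bool) → Option Bool :=
  fun x => prOR n (fun i => f (fun j => x (i, j)))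

/-- `OR_n ∘ (f₁, …, f_n)`: the OR of `n` possibly different functions on disjoint blocks. -/
def orMulti (n : ℕ) (m : Fin n → ℕ) (f : ∀ i, (Fin (m i) → Bool) → Bool) :
    ((Σ i, Fin (m i)) → Bool) → Bool :=
  fun x => decide (∃ i : Fin n, f i (fun j => x ⟨i, j⟩) = true)

/-- Parity (XOR) of a Boolean string. -/
def parityB {ι : Type*} [Fintype ι] (x : ι → Bool) : Bool := decide (wt x % 2 = 1)

/-- The combinatorial group testing oracle string of a hidden input `x`:
coordinate `S` is the OR of the bits of `x` in `S`. -/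
def cgtInput {n : ℕ} (x : Fin n → Bool) : Finset (Fin n) → Bool :=
  fun S => decide (∃ i ∈ S, x i = true)

/-- The `γ₂` norm of a real matrix: the infimum over factorizations `A = B * C` of the
product of the largest `ℓ₂` row norm of `B` and the largest `ℓ₂` column norm of `C`. -/
noncomputable def gamma2 {X Y : Type*} (A : Matrix X Y ℝ) : ℝ :=
  sInf {r : ℝ | ∃ (k : ℕ) (B : Matrix X (Fin k) ℝ) (C : Matrix (Fin k) Y ℝ),
    A = B * C ∧
    r = (⨆ x, Real.sqrt (∑ j, (B x j) ^ 2)) * (⨆ y, Real.sqrt (∑ j, (C j y) ^ 2))}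

/-- `A` approximates the sign matrix of the total communication function `F` to error `ε`. -/
def ApproxMat {X Y : Type*} (A : Matrix X Y ℝ) (F : X → Y → Bool) (ε : ℝ) : Prop :=
  (∀ x y, |A x y - bPM (F x y)| ≤ ε) ∧ (∀ x y, |A x y| ≤ 1)

/-- `ε`-approximate `γ₂` norm of a total communication function. -/
noncomputable def gamma2Eps {X Y : Type*} (F : X → Y → Bool) (ε : ℝ) : ℝ :=
  sInf {r : ℝ | ∃ A : Matrix X Y ℝ, ApproxMat A F ε ∧ r = gamma2 A}

/-- `ε`-approximate rank of a total communication function. -/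
noncomputable def rankEps {X Y : Type*} [Fintype X] [Fintype Y]
    (F : X → Y → Bool) (ε : ℝ) : ℕ :=
  sInf {r : ℕ | ∃ A : Matrix X Y ℝ, ApproxMat A F ε ∧ A.rank = r}

/-- Approximate `γ₂` norm (error `2/3`, matching sign-matrix entries in `{-1,1}`). -/
noncomputable def agamma2 {X Y : Type*} (F : X → Y → Bool) : ℝ := gamma2Eps F (2/3)

/-- Approximate rank (error `2/3`). -/
noncomputable def arank {X Y : Type*} [Fintype X] [Fintype Y] (F : X → Y → Bool) : ℕ :=
  rankEps F (2/3)

/-- `A` approximates a partial communication function `F` to error `ε`. -/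
def ApproxMatP {X Y : Type*} (A : Matrix X Y ℝ) (F : X → Y → Option Bool) (ε : ℝ) : Prop :=
  (∀ x y b, F x y = some b → |A x y - bPM b| ≤ ε) ∧ (∀ x y, |A x y| ≤ 1)

/-- Approximate `γ₂` norm of a partial communication function (error `2/3`). -/
noncomputable def agamma2P {X Y : Type*} (F : X → Y → Option Bool) : ℝ :=
  sInf {r : ℝ | ∃ A : Matrix X Y ℝ, ApproxMatP A F (2/3) ∧ r = gamma2 A}

/-- The set disjointness communication function. -/
def DISJ (n : ℕ) : (Fin n → Bool) → (Fin n → Bool) → Bool :=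
  fun x y => decide (∃ i, x i = true ∧ y i = true)

/-- `OR_n ∘ F` in communication complexity. -/
def orComm {X Y : Type*} (n : ℕ) (F : X → Y → Bool) :
    (Fin n → X) → (Fin n → Y) → Bool :=
  fun x y => decide (∃ i, F (x i) (y i) = true)

/-- `XOR_n ∘ F` in communication complexity. -/
def xorComm {X Y : Type*} (n : ℕ) (F : X → Y → Bool) :
    (Fin n → X) → (Fin n → Y) → Bool :=
  fun x y => parityB (fun i => F (x i) (y i))

/-- `g ∘ F` in communication complexity, for an outer Boolean function `g`. -/
def gComm {X Y : Type*} {n : ℕ} (g : (Fin n → Bool) → Bool) (F : X → Y → Bool) :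
    (Fin n → X) → (Fin n → Y) → Bool :=
  fun x y => g (fun i => F (x i) (y i))

/-- `PrOR_n ∘ F` for a partial communication function `F`: the output is `*` if some
inner value is `*` or if the tuple of inner values is outside the promise of `PrOR_n`. -/
def prorComm {X Y : Type*} (n : ℕ) (F : X → Y → Option Bool) :
    (Fin n → X) → (Fin n → Y) → Option Bool :=
  fun x y =>
    if ∀ i, (F (x i) (y i)).isSome then
      prOR n (fun i => (F (x i) (y i)).getD false)
    else none

/-- Two communication functions are equivalent (identical up to permuting rows/columns and
deleting/duplicating repeated rows/columns) iff each is an image of the other under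
row and column reindexing maps. -/
def CommEquiv {X Y X' Y' : Type*} (F : X → Y → Bool) (G : X' → Y' → Bool) : Prop :=
  ∃ (φ : X → X') (ψ : Y → Y') (φ' : X' → X) (ψ' : Y' → Y),
    (∀ x y, F x y = G (φ x) (ψ y)) ∧ (∀ x' y', G x' y' = F (φ' x') (ψ' y'))

/-- `F` is equivalent to some instance of the not-equal function `NOTEQ`. -/
def IsNotEqualLike {X Y : Type*} (F : X → Y → Bool) : Prop :=
  ∃ (S T : Finset ℕ),
    CommEquiv F (fun (x : {a // a ∈ S}) (y : {a // a ∈ T}) => decide ((x : ℕ) ≠ (y : ℕ)))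


/-!
The `γ₂` norm is subadditive, absolutely homogeneous and submultiplicative for the Hadamard
product: from factorizations `A = B C` and `A' = B' C'` one gets `A + A' = [B B'] [C; C']`
and `A ⊙ A' = (B ⊗ B') (C ⊗ C')`, with row-wise and column-wise tensor products whose norms
multiply, while the all-ones matrix is `𝟙 𝟙ᵀ`. So the matrix of a monomial `∏ xᵢ^{mᵢ}` has
`γ₂ ≤ ∏ γ₂(Aᵢ)^{mᵢ} ≤ M^{deg p}` with `M = max(1, maxᵢ γ₂(Aᵢ))`, and the triangle inequality
over the monomials of `p` gives the bound.
-/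

open Matrix Finset

section Gamma2

variable {X Y : Type*}

/-- `A = B C` with every squared row norm of `B` and column norm of `C` at most `r`: balancing
the two sides is what makes such bounds add up under sums of matrices. -/
def HasFactorizationBound (A : Matrix X Y ℝ) (r : ℝ) : Prop :=
  0 ≤ r ∧ ∃ (J : Type) (_ : Fintype J) (B : Matrix X J ℝ) (C : Matrix J Y ℝ),
    A = B * C ∧ (∀ x, ∑ j, B x j ^ 2 ≤ r) ∧ ∀ y, ∑ j, C j y ^ 2 ≤ r

theorem iSup_sqrt_mul_iSup_sqrt_nonneg {ι κ : Sort*} (f : ι → ℝ) (g : κ → ℝ) :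
    0 ≤ (⨆ i, √(f i)) * ⨆ k, √(g k) :=
  mul_nonneg (Real.iSup_nonneg fun _ => Real.sqrt_nonneg _)
    (Real.iSup_nonneg fun _ => Real.sqrt_nonneg _)

theorem gamma2_nonneg (A : Matrix X Y ℝ) : 0 ≤ gamma2 A :=
  Real.sInf_nonneg <| by
    rintro _ ⟨k, B, C, -, rfl⟩
    exact iSup_sqrt_mul_iSup_sqrt_nonneg _ _

theorem gamma2_le_of_eq_mul {J : Type*} [Fintype J] {A : Matrix X Y ℝ} (B : Matrix X J ℝ)
    (C : Matrix J Y ℝ) (h : A = B * C) :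
    gamma2 A ≤ (⨆ x, √(∑ j, B x j ^ 2)) * ⨆ y, √(∑ j, C j y ^ 2) := by
  let e := Fintype.equivFin J
  refine csInf_le ⟨0, ?_⟩ ⟨Fintype.card J, B.submatrix id e.symm, C.submatrix e.symm id, ?_, ?_⟩
  · rintro _ ⟨k, B, C, -, rfl⟩
    exact iSup_sqrt_mul_iSup_sqrt_nonneg _ _
  · rw [h, submatrix_mul_equiv B C id e.symm id, submatrix_id_id]
  · congr 1
    · exact iSup_congr fun x => by rw [← e.symm.sum_comp fun j => B x j ^ 2]; rfl
    · exact iSup_congr fun y => by rw [← e.symm.sum_comp fun j => C j y ^ 2]; rfl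

theorem HasFactorizationBound.gamma2_le {A : Matrix X Y ℝ} {r : ℝ}
    (h : HasFactorizationBound A r) : gamma2 A ≤ r := by
  obtain ⟨hr, J, _, B, C, hA, hB, hC⟩ := h
  calc gamma2 A ≤ (⨆ x, √(∑ j, B x j ^ 2)) * ⨆ y, √(∑ j, C j y ^ 2) :=
        gamma2_le_of_eq_mul B C hA
    _ ≤ √r * √r :=
        mul_le_mul (Real.iSup_le (fun x => Real.sqrt_le_sqrt (hB x)) (Real.sqrt_nonneg _))
          (Real.iSup_le (fun y => Real.sqrt_le_sqrt (hC y)) (Real.sqrt_nonneg _))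
          (Real.iSup_nonneg fun _ => Real.sqrt_nonneg _) (Real.sqrt_nonneg _)
    _ = r := Real.mul_self_sqrt hr

theorem hasFactorizationBound_zero {r : ℝ} (hr : 0 ≤ r) :
    HasFactorizationBound (0 : Matrix X Y ℝ) r :=
  ⟨hr, Empty, inferInstance, 0, 0, by simp, fun _ => by simpa using hr, fun _ => by simpa using hr⟩

theorem eq_zero_of_forall_sum_sq_nonpos {J : Type*} [Fintype J] {B : Matrix X J ℝ}
    (hB : ∀ x, ∑ j, B x j ^ 2 ≤ 0) : B = 0 := by
  ext x j
  have hsum : ∑ j, B x j * B x j = 0 := by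
    simpa only [sq] using le_antisymm (hB x) (sum_nonneg fun j _ => sq_nonneg (B x j))
  exact (sum_mul_self_eq_zero_iff _ _).1 hsum j (mem_univ j)

/-- Rescaling `B ↦ t B`, `C ↦ t⁻¹ C` with `t² = b / a` balances the two sides. -/
theorem hasFactorizationBound_of_eq_mul {J : Type} [Fintype J] {A : Matrix X Y ℝ}
    {B : Matrix X J ℝ} {C : Matrix J Y ℝ} (hA : A = B * C) {a b r : ℝ} (ha : 0 ≤ a)
    (hb : 0 ≤ b) (hB : ∀ x, ∑ j, B x j ^ 2 ≤ a ^ 2) (hC : ∀ y, ∑ j, C j y ^ 2 ≤ b ^ 2)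
    (hab : a * b ≤ r) : HasFactorizationBound A r := by
  have hr : 0 ≤ r := (mul_nonneg ha hb).trans hab
  rcases ha.eq_or_lt with rfl | ha
  · rw [hA, eq_zero_of_forall_sum_sq_nonpos (B := B) (by simpa using hB), Matrix.zero_mul]
    exact hasFactorizationBound_zero hr
  rcases hb.eq_or_lt with rfl | hb
  · have hCt : Cᵀ = 0 := eq_zero_of_forall_sum_sq_nonpos (by simpa using hC)
    rw [hA, transpose_eq_zero.1 hCt, Matrix.mul_zero]
    exact hasFactorizationBound_zero hr
  set t := √(b / a)
  have ht : t ^ 2 = b / a := Real.sq_sqrt (by positivity)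
  have ht0 : t ≠ 0 := by positivity
  refine ⟨hr, J, inferInstance, t • B, t⁻¹ • C, ?_, fun x => ?_, fun y => ?_⟩
  · rw [hA, Matrix.smul_mul, Matrix.mul_smul, smul_smul, mul_inv_cancel₀ ht0, one_smul]
  · calc ∑ j, (t • B) x j ^ 2 = t ^ 2 * ∑ j, B x j ^ 2 := by
          simp only [Matrix.smul_apply, smul_eq_mul, mul_pow, mul_sum]
      _ ≤ b / a * a ^ 2 := by rw [ht]; gcongr; exact hB x
      _ = a * b := by field_simp
      _ ≤ r := hab
  · calc ∑ j, (t⁻¹ • C) j y ^ 2 = (t ^ 2)⁻¹ * ∑ j, C j y ^ 2 := by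
          simp only [Matrix.smul_apply, smul_eq_mul, mul_pow, inv_pow, mul_sum]
      _ ≤ (b / a)⁻¹ * b ^ 2 := by rw [ht]; gcongr; exact hC y
      _ = a * b := by field_simp
      _ ≤ r := hab

theorem hasFactorizationBound_of_gamma2_lt [Finite X] [Fintype Y] {A : Matrix X Y ℝ} {r : ℝ}
    (h : gamma2 A < r) : HasFactorizationBound A r := by
  classical
  let e := Fintype.equivFin Y
  obtain ⟨_, ⟨k, B, C, hA, rfl⟩, hlt⟩ := exists_lt_of_csInf_lt (by
    refine ⟨_, Fintype.card Y, A.submatrix id e.symm, (1 : Matrix Y Y ℝ).submatrix e.symm id,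
      ?_, rfl⟩
    rw [submatrix_mul_equiv A 1 id _ id, Matrix.mul_one, submatrix_id_id]) h
  have hrow (x : X) : ∑ j, B x j ^ 2 ≤ (⨆ x, √(∑ j, B x j ^ 2)) ^ 2 :=
    (Real.sqrt_le_iff.1 (le_ciSup (f := fun x => √(∑ j, B x j ^ 2))
      (Finite.bddAbove_range _) x)).2
  have hcol (y : Y) : ∑ j, C j y ^ 2 ≤ (⨆ y, √(∑ j, C j y ^ 2)) ^ 2 :=
    (Real.sqrt_le_iff.1 (le_ciSup (f := fun y => √(∑ j, C j y ^ 2))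
      (Finite.bddAbove_range _) y)).2
  exact hasFactorizationBound_of_eq_mul hA (Real.iSup_nonneg fun _ => Real.sqrt_nonneg _)
    (Real.iSup_nonneg fun _ => Real.sqrt_nonneg _) hrow hcol hlt.le

theorem hasFactorizationBound_gamma2_add [Finite X] [Fintype Y] (A : Matrix X Y ℝ) {ε : ℝ}
    (hε : 0 < ε) : HasFactorizationBound A (gamma2 A + ε) :=
  hasFactorizationBound_of_gamma2_lt (lt_add_of_pos_right _ hε)

theorem gamma2_le_of_forall_pos {A : Matrix X Y ℝ} {f : ℝ → ℝ}
    (hf : ContinuousWithinAt f (Set.Ioi 0) 0) (h : ∀ ε > 0, HasFactorizationBound A (f ε)) :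
    gamma2 A ≤ f 0 :=
  ge_of_tendsto hf (eventually_nhdsWithin_of_forall fun ε hε => (h ε hε).gamma2_le)

namespace HasFactorizationBound

variable {A A' : Matrix X Y ℝ} {r r' : ℝ}

theorem add (h : HasFactorizationBound A r) (h' : HasFactorizationBound A' r') :
    HasFactorizationBound (A + A') (r + r') := by
  obtain ⟨hr, J, _, B, C, rfl, hB, hC⟩ := h
  obtain ⟨hr', J', _, B', C', rfl, hB', hC'⟩ := h'
  refine ⟨add_nonneg hr hr', J ⊕ J', inferInstance, fromCols B B', fromRows C C',
    (fromCols_mul_fromRows B B' C C').symm, fun x => ?_, fun y => ?_⟩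
  · simpa [Fintype.sum_sum_type] using add_le_add (hB x) (hB' x)
  · simpa [Fintype.sum_sum_type] using add_le_add (hC y) (hC' y)

theorem smul (h : HasFactorizationBound A r) (c : ℝ) :
    HasFactorizationBound (c • A) (|c| * r) := by
  obtain ⟨hr, J, _, B, C, rfl, hB, hC⟩ := h
  refine hasFactorizationBound_of_eq_mul (a := |c| * √r) (b := √r) (Matrix.smul_mul c B C).symm
    (by positivity) (Real.sqrt_nonneg r) (fun x => ?_) (fun y => ?_) ?_
  · calc ∑ j, (c • B) x j ^ 2 = c ^ 2 * ∑ j, B x j ^ 2 := by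
          simp only [Matrix.smul_apply, smul_eq_mul, mul_pow, mul_sum]
      _ ≤ (|c| * √r) ^ 2 := by
          rw [mul_pow, sq_abs, Real.sq_sqrt hr]; gcongr; exact hB x
  · rw [Real.sq_sqrt hr]; exact hC y
  · rw [mul_assoc, Real.mul_self_sqrt hr]

theorem hadamard (h : HasFactorizationBound A r) (h' : HasFactorizationBound A' r') :
    HasFactorizationBound (A ⊙ A') (r * r') := by
  obtain ⟨hr, J, _, B, C, rfl, hB, hC⟩ := h
  obtain ⟨hr', J', _, B', C', rfl, hB', hC'⟩ := h'
  refine ⟨mul_nonneg hr hr', J × J', inferInstance, of fun x j => B x j.1 * B' x j.2,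
    of fun j y => C j.1 y * C' j.2 y, ?_, fun x => ?_, fun y => ?_⟩
  · ext x y
    simp only [hadamard_apply, mul_apply, of_apply, sum_mul_sum, Fintype.sum_prod_type]
    exact sum_congr rfl fun _ _ => sum_congr rfl fun _ _ => by ring
  · simpa only [of_apply, mul_pow, Fintype.sum_prod_type, ← sum_mul_sum] using
      mul_le_mul (hB x) (hB' x) (sum_nonneg fun _ _ => sq_nonneg _) hr
  · simpa only [of_apply, mul_pow, Fintype.sum_prod_type, ← sum_mul_sum] using
      mul_le_mul (hC y) (hC' y) (sum_nonneg fun _ _ => sq_nonneg _) hr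

end HasFactorizationBound

theorem hasFactorizationBound_ones :
    HasFactorizationBound (of fun (_ : X) (_ : Y) => (1 : ℝ)) 1 :=
  ⟨zero_le_one, Unit, inferInstance, of fun _ _ => 1, of fun _ _ => 1,
    by ext; simp [mul_apply], by simp, by simp⟩

variable [Finite X] [Fintype Y]

theorem gamma2_add_le (A A' : Matrix X Y ℝ) : gamma2 (A + A') ≤ gamma2 A + gamma2 A' := by
  simpa using gamma2_le_of_forall_pos (f := fun ε => (gamma2 A + ε) + (gamma2 A' + ε))
    (by fun_prop) fun ε hε =>
      (hasFactorizationBound_gamma2_add A hε).add (hasFactorizationBound_gamma2_add A' hε)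

theorem gamma2_smul_le (c : ℝ) (A : Matrix X Y ℝ) : gamma2 (c • A) ≤ |c| * gamma2 A := by
  simpa using gamma2_le_of_forall_pos (f := fun ε => |c| * (gamma2 A + ε))
    (by fun_prop) fun ε hε => (hasFactorizationBound_gamma2_add A hε).smul c

theorem gamma2_hadamard_le (A A' : Matrix X Y ℝ) : gamma2 (A ⊙ A') ≤ gamma2 A * gamma2 A' := by
  simpa using gamma2_le_of_forall_pos (f := fun ε => (gamma2 A + ε) * (gamma2 A' + ε))
    (by fun_prop) fun ε hε =>
      (hasFactorizationBound_gamma2_add A hε).hadamard (hasFactorizationBound_gamma2_add A' hε)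

theorem gamma2_sum_le {ι : Type*} (s : Finset ι) (F : ι → Matrix X Y ℝ) :
    gamma2 (∑ i ∈ s, F i) ≤ ∑ i ∈ s, gamma2 (F i) := by
  classical
  induction s using Finset.induction_on with
  | empty => simpa using (hasFactorizationBound_zero le_rfl).gamma2_le
  | insert a s ha ih =>
    rw [sum_insert ha, sum_insert ha]
    exact (gamma2_add_le _ _).trans (by gcongr)

theorem gamma2_prod_le {ι : Type*} (s : Finset ι) (F : ι → Matrix X Y ℝ) :
    gamma2 (of fun x y => ∏ i ∈ s, F i x y) ≤ ∏ i ∈ s, gamma2 (F i) := by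
  classical
  induction s using Finset.induction_on with
  | empty => simpa using hasFactorizationBound_ones.gamma2_le
  | insert a s ha ih =>
    have hsplit : (of fun x y => ∏ i ∈ insert a s, F i x y) =
        F a ⊙ of fun x y => ∏ i ∈ s, F i x y := by
      ext x y
      simp [prod_insert ha]
    rw [hsplit, prod_insert ha]
    exact (gamma2_hadamard_le _ _).trans
      (mul_le_mul_of_nonneg_left ih (gamma2_nonneg _))

theorem gamma2_pow_le (A : Matrix X Y ℝ) (n : ℕ) :
    gamma2 (of fun x y => A x y ^ n) ≤ gamma2 A ^ n := by
  simpa using gamma2_prod_le (range n) fun _ => A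

theorem gamma2_eval_le {σ : Type*} (p : MvPolynomial σ ℝ) (A : σ → Matrix X Y ℝ) {M : ℝ}
    (hM : 1 ≤ M) (hA : ∀ i, gamma2 (A i) ≤ M) :
    gamma2 (of fun x y => MvPolynomial.eval (fun i => A i x y) p) ≤
      (∑ m ∈ p.support, |MvPolynomial.coeff m p|) * M ^ p.totalDegree := by
  have hmonomial : ∀ m ∈ p.support,
      gamma2 (of fun x y => ∏ i ∈ m.support, A i x y ^ m i) ≤ M ^ p.totalDegree := by
    intro m hm
    calc gamma2 (of fun x y => ∏ i ∈ m.support, A i x y ^ m i)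
        ≤ ∏ i ∈ m.support, gamma2 (of fun x y => A i x y ^ m i) :=
          gamma2_prod_le m.support fun i => of fun x y => A i x y ^ m i
      _ ≤ ∏ i ∈ m.support, M ^ m i := prod_le_prod (fun _ _ => gamma2_nonneg _)
          fun i _ => (gamma2_pow_le _ _).trans (pow_le_pow_left₀ (gamma2_nonneg _) (hA i) _)
      _ = M ^ m.sum fun _ e => e := prod_pow_eq_pow_sum _ _ _
      _ ≤ M ^ p.totalDegree := pow_le_pow_right₀ hM (MvPolynomial.le_totalDegree hm)
  have hsum : (of fun x y => MvPolynomial.eval (fun i => A i x y) p) =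
      ∑ m ∈ p.support, MvPolynomial.coeff m p • of fun x y => ∏ i ∈ m.support, A i x y ^ m i := by
    ext x y
    simp [MvPolynomial.eval_eq, Matrix.sum_apply]
  rw [hsum, sum_mul]
  exact (gamma2_sum_le _ _).trans <| sum_le_sum fun m hm =>
    (gamma2_smul_le _ _).trans (mul_le_mul_of_nonneg_left (hmonomial m hm) (abs_nonneg _))

end Gamma2

/-- plugging matrices into a polynomial (with Hadamard products) multiplies
the `γ₂` norm by at most the coefficient sum times `max(1, max γ₂(A_i))^{deg p}`. -/
theorem stmt12 {X Y : Type*} [Fintype X] [Fintype Y] (N : ℕ)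
    (p : MvPolynomial (Fin N) ℝ) (A : Fin N → Matrix X Y ℝ) :
    gamma2 (Matrix.of fun x y => MvPolynomial.eval (fun i => A i x y) p) ≤
      (∑ m ∈ p.support, |MvPolynomial.coeff m p|) *
        (max 1 (⨆ i, gamma2 (A i))) ^ p.totalDegree :=
  gamma2_eval_le p A (le_max_left _ _) fun i =>
    (le_ciSup (f := fun i => gamma2 (A i)) (Finite.bddAbove_range _) i).trans (le_max_right _ _)
end
end

section
/- Let p be a real polynomial in n variables of degree at most d (with d ≥ 1) such that |p(x)| ≤ 1 for all x ∈ [0,1]^n. Then the absolute value of every coefficient of p is at most (2d)^{3d}, and the sum of the absolute values of all coefficients of p is at most (2(n+d))^{3d}. -/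
open MvPolynomial

noncomputable section

/-!
Substituting `x ↦ x / d` gives `q(x) = p(x / d)`, bounded by `1` on the integer grid `{0, …, d}ⁿ`,
with `coeff m p = d^|m| · coeff m q`. Newton interpolation on that grid expands
`q = ∑_{|b| ≤ d} (Δ^b q(0) / b!) · ∏ᵢ xᵢ (xᵢ - 1) ⋯ (xᵢ - bᵢ + 1)`. The mixed difference
`Δ^b q(0)` is a signed combination of grid values with total weight `2^|b|`, and the falling
factorial has coefficient `ℓ¹`-norm at most `b!`, so each term has `ℓ¹`-norm at most `2^d`.
At most `(d + 1)(n + d)^d` multi-indices satisfy `|b| ≤ d`, and only the `(d + 1)^d` of them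
supported in `supp m` contribute to the coefficient of `xᵐ`.
-/

open Finset

namespace Polynomial

theorem eq_sum_fwdDiff_iter_smul_descPochhammer {K : Type*} [Field K] [CharZero K]
    (P : K[X]) {D : ℕ} (hP : P.natDegree ≤ D) :
    P = ∑ k ∈ range (D + 1),
      ((fwdDiff 1)^[k] P.eval 0 / k.factorial) • descPochhammer K k := by
  -- both sides agree at every natural number `N`, by the Gregory–Newton formula
  refine eq_of_infinite_eval_eq _ _ ((Set.infinite_range_of_injective Nat.cast_injective).mono ?_)
  rintro _ ⟨N, rfl⟩
  have hnewton := shift_eq_sum_fwdDiff_iter 1 P.eval N 0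
  rw [zero_add, nsmul_one] at hnewton
  simp only [Set.mem_ofPred_eq, eval_finsetSum, eval_smul, descPochhammer_eval_eq_descFactorial,
    Nat.descFactorial_eq_factorial_mul_choose, hnewton, smul_eq_mul, nsmul_eq_mul]
  calc ∑ k ∈ range (N + 1), (N.choose k : K) * (fwdDiff 1)^[k] P.eval 0
      = ∑ k ∈ range (N + D + 1), (N.choose k : K) * (fwdDiff 1)^[k] P.eval 0 := by
        refine sum_subset (range_subset_range.mpr (by omega)) fun k _ hk => ?_
        rw [Nat.choose_eq_zero_of_lt (by simpa using hk), Nat.cast_zero, zero_mul]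
    _ = ∑ k ∈ range (D + 1), (N.choose k : K) * (fwdDiff 1)^[k] P.eval 0 := by
        refine (sum_subset (range_subset_range.mpr (by omega)) fun k _ hk => ?_).symm
        rw [fwdDiff_iter_eq_zero_of_degree_lt (by simp only [mem_range, not_lt] at hk; omega),
          Pi.zero_apply, mul_zero]
    _ = _ := sum_congr rfl fun k _ => by
        have := k.factorial_ne_zero
        push_cast
        field_simp

lemma aeval_descPochhammer_eq_prod_range {R A : Type*} [CommRing R] [CommRing A] [Algebra R A]
    (k : ℕ) (x : A) : aeval x (descPochhammer R k) = ∏ j ∈ range k, (x - j) := by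
  rw [aeval_def, eval₂_eq_eval_map, descPochhammer_map, descPochhammer_eval_eq_prod_range]

end Polynomial

lemma Finsupp.card_support_le_degree {ι : Type*} (m : ι →₀ ℕ) :
    #m.support ≤ m.degree := by
  rw [card_eq_sum_ones, Finsupp.degree_apply]
  exact Finset.sum_le_sum fun i hi =>
    Nat.one_le_iff_ne_zero.mpr (mem_support_iff.mp hi)

section Counting

variable {σ : Type*} [Fintype σ] [DecidableEq σ]

lemma card_piAntidiag_univ_le {k d : ℕ} (hk : k ≤ d) :
    #(piAntidiag (univ : Finset σ) k) ≤ (Fintype.card σ + d) ^ d :=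
  calc #(piAntidiag univ k) = #((univ : Finset σ).sym k) := by
        rw [← map_sym_eq_piAntidiag, card_map]
    _ ≤ Fintype.card (Sym σ k) := card_le_univ _
    _ = (Fintype.card σ + k - 1).choose k := Sym.card_sym_eq_choose k
    _ ≤ (Fintype.card σ + k - 1) ^ k := Nat.choose_le_pow _ _
    _ ≤ (Fintype.card σ + d) ^ d := by
        rcases Nat.eq_zero_or_pos (Fintype.card σ + d) with h | h
        · obtain rfl : d = 0 := by omega
          obtain rfl : k = 0 := by omega
          simp
        · exact (Nat.pow_le_pow_left (by omega) k).trans (Nat.pow_le_pow_right h hk)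

lemma card_piFinset_filter_sum_le (d : ℕ) :
    #{b ∈ Fintype.piFinset (fun _ : σ => range (d + 1)) | ∑ i, b i ≤ d} ≤
      (d + 1) * (Fintype.card σ + d) ^ d := by
  have hsub : {b ∈ Fintype.piFinset (fun _ : σ => range (d + 1)) | ∑ i, b i ≤ d} ⊆
      (range (d + 1)).biUnion fun k => piAntidiag univ k := by
    intro b hb
    simp [(mem_filter.mp hb).2]
  refine (card_le_card hsub).trans (card_biUnion_le.trans ?_)
  refine (sum_le_sum fun k hk =>
    card_piAntidiag_univ_le (Nat.lt_succ_iff.mp (mem_range.mp hk))).trans_eq ?_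
  simp

lemma card_piFinset_ite_mem (s : Finset σ) (d : ℕ) :
    #(Fintype.piFinset fun i => if i ∈ s then range (d + 1) else {0}) = (d + 1) ^ #s := by
  rw [Fintype.card_piFinset]
  simp [apply_ite]

end Counting

lemma pow_mul_pow_le_pow_three_mul {d : ℕ} (hd : 1 ≤ d) :
    (2 * d) ^ d * (d + 1) ^ d ≤ (2 * d) ^ (3 * d) :=
  calc (2 * d) ^ d * (d + 1) ^ d ≤ (2 * d) ^ d * ((2 * d) ^ 2) ^ d :=
        Nat.mul_le_mul_left _ (Nat.pow_le_pow_left (by nlinarith) d)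
    _ = (2 * d) ^ (3 * d) := by rw [← pow_mul, ← pow_add]; ring_nf

lemma pow_mul_mul_pow_le_pow_three_mul {n d : ℕ} (hd : 1 ≤ d) :
    (2 * d) ^ d * ((d + 1) * (n + d) ^ d) ≤ (2 * (n + d)) ^ (3 * d) :=
  calc (2 * d) ^ d * ((d + 1) * (n + d) ^ d)
      ≤ (2 * (n + d)) ^ d * ((2 * (n + d)) ^ d * (2 * (n + d)) ^ d) :=
        Nat.mul_le_mul (Nat.pow_le_pow_left (by omega) d) (Nat.mul_le_mul
          (Nat.lt_two_pow_self.trans_le (Nat.pow_le_pow_left (by omega) d))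
          (Nat.pow_le_pow_left (by omega) d))
    _ = (2 * (n + d)) ^ (3 * d) := by ring

namespace MvPolynomial

section SumAbsCoeff

variable {σ : Type*}

def sumAbsCoeff (p : MvPolynomial σ ℝ) : ℝ := ∑ m ∈ p.support, |coeff m p|

lemma sumAbsCoeff_eq_sum_of_support_subset (p : MvPolynomial σ ℝ) {s : Finset (σ →₀ ℕ)}
    (hs : p.support ⊆ s) : sumAbsCoeff p = ∑ m ∈ s, |coeff m p| :=
  sum_subset hs fun m _ hm => by rw [notMem_support_iff.mp hm, abs_zero]

lemma sumAbsCoeff_nonneg (p : MvPolynomial σ ℝ) : 0 ≤ sumAbsCoeff p :=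
  sum_nonneg fun _ _ => abs_nonneg _

lemma abs_coeff_le_sumAbsCoeff (p : MvPolynomial σ ℝ) (m : σ →₀ ℕ) :
    |coeff m p| ≤ sumAbsCoeff p := by
  classical
  rw [sumAbsCoeff_eq_sum_of_support_subset p (subset_insert m p.support)]
  exact single_le_sum (f := fun m => |coeff m p|) (fun _ _ => abs_nonneg _) (mem_insert_self m _)

lemma sumAbsCoeff_add_le (p q : MvPolynomial σ ℝ) :
    sumAbsCoeff (p + q) ≤ sumAbsCoeff p + sumAbsCoeff q := by
  classical
  rw [sumAbsCoeff_eq_sum_of_support_subset (p + q) support_add,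
    sumAbsCoeff_eq_sum_of_support_subset p subset_union_left,
    sumAbsCoeff_eq_sum_of_support_subset q subset_union_right, ← sum_add_distrib]
  exact sum_le_sum fun m _ => by rw [coeff_add]; exact abs_add_le _ _

lemma sumAbsCoeff_sum_le {ι : Type*} (s : Finset ι) (f : ι → MvPolynomial σ ℝ) :
    sumAbsCoeff (∑ i ∈ s, f i) ≤ ∑ i ∈ s, sumAbsCoeff (f i) :=
  le_sum_of_subadditive _ (by simp [sumAbsCoeff]) sumAbsCoeff_add_le s f

@[simp]
lemma sumAbsCoeff_monomial (m : σ →₀ ℕ) (a : ℝ) : sumAbsCoeff (monomial m a) = |a| := by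
  classical
  by_cases ha : a = 0
  · simp [ha, sumAbsCoeff]
  · simp [sumAbsCoeff, support_monomial, ha]

lemma sumAbsCoeff_smul (c : ℝ) (p : MvPolynomial σ ℝ) :
    sumAbsCoeff (c • p) = |c| * sumAbsCoeff p := by
  rw [sumAbsCoeff_eq_sum_of_support_subset _ support_smul, sumAbsCoeff, mul_sum]
  simp [abs_mul]

lemma sumAbsCoeff_mul_le (p q : MvPolynomial σ ℝ) :
    sumAbsCoeff (p * q) ≤ sumAbsCoeff p * sumAbsCoeff q := by
  calc sumAbsCoeff (p * q)
      = sumAbsCoeff (∑ a ∈ p.support, ∑ b ∈ q.support,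
          monomial (a + b) (coeff a p * coeff b q)) := by
        simp only [← monomial_mul, ← sum_mul_sum, ← as_sum]
    _ ≤ ∑ a ∈ p.support, ∑ b ∈ q.support, |coeff a p| * |coeff b q| := by
        refine (sumAbsCoeff_sum_le _ _).trans (sum_le_sum fun a _ => ?_)
        refine (sumAbsCoeff_sum_le _ _).trans_eq (sum_congr rfl fun b _ => ?_)
        rw [sumAbsCoeff_monomial, abs_mul]
    _ = sumAbsCoeff p * sumAbsCoeff q := by rw [sumAbsCoeff, sumAbsCoeff, sum_mul_sum]

lemma sumAbsCoeff_prod_le {ι : Type*} (s : Finset ι) (f : ι → MvPolynomial σ ℝ) :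
    sumAbsCoeff (∏ i ∈ s, f i) ≤ ∏ i ∈ s, sumAbsCoeff (f i) := by
  classical
  induction s using Finset.induction with
  | empty => simpa using (sumAbsCoeff_monomial 0 1).le
  | insert i s hi ih =>
    rw [prod_insert hi, prod_insert hi]
    exact (sumAbsCoeff_mul_le _ _).trans (mul_le_mul_of_nonneg_left ih (sumAbsCoeff_nonneg _))

lemma sumAbsCoeff_X_sub_natCast_le (i : σ) (j : ℕ) :
    sumAbsCoeff (X i - (j : MvPolynomial σ ℝ)) ≤ 1 + j := by
  rw [sub_eq_add_neg, X, ← map_natCast (C : ℝ →+* MvPolynomial σ ℝ), ← map_neg, C_apply]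
  refine (sumAbsCoeff_add_le _ _).trans_eq ?_
  rw [sumAbsCoeff_monomial, sumAbsCoeff_monomial, abs_one, abs_neg, Nat.abs_cast]

end SumAbsCoeff

section Rescale

variable {σ R : Type*} [CommRing R]

def rescale (c : R) (p : MvPolynomial σ R) : MvPolynomial σ R := aeval (fun i => C c * X i) p

lemma eval_rescale (c : R) (p : MvPolynomial σ R) (x : σ → R) :
    eval x (rescale c p) = eval (fun i => c * x i) p := by
  rw [rescale, aeval_eq_bind₁]
  exact (eval₂Hom_bind₁ (RingHom.id R) x _ p).trans (by simp)

lemma coeff_rescale [Fintype σ] (c : R) (p : MvPolynomial σ R) (m : σ →₀ ℕ) :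
    coeff m (rescale c p) = c ^ m.degree * coeff m p := by
  induction p using MvPolynomial.induction_on' with
  | monomial u a =>
    classical
    have hu : ∏ i, (C c * X i : MvPolynomial σ R) ^ u i = monomial u (c ^ u.degree) := by
      rw [monomial_eq, Finsupp.prod_pow, Finsupp.degree_eq_sum, ← prod_pow_eq_pow_sum, map_prod,
        ← prod_mul_distrib]
      simp only [mul_pow, map_pow]
    rw [rescale, aeval_monomial, Finsupp.prod_pow, hu, algebraMap_eq, coeff_C_mul, coeff_monomial,
      coeff_monomial]
    split_ifs with h
    · rw [h, mul_comm]
    · rw [mul_zero, mul_zero]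
  | add p q hp hq => simp only [rescale, map_add, coeff_add] at hp hq ⊢; rw [hp, hq, mul_add]

lemma support_rescale_subset [Fintype σ] (c : R) (p : MvPolynomial σ R) :
    (rescale c p).support ⊆ p.support := fun m hm => by
  rw [mem_support_iff, coeff_rescale] at hm
  exact mem_support_iff.mpr (right_ne_zero_of_mul hm)

end Rescale

section MixedFwdDiff

variable {σ R : Type*} [Fintype σ] [DecidableEq σ] [CommRing R]

/-- The mixed forward difference `Δ_{e₁}^{b₁} ⋯ Δ_{eₙ}^{bₙ} f` at `0` (unit steps along the
axes), expanded into the values of `f` on the grid `γ ≤ b`. -/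
def mixedFwdDiff (b : σ → ℕ) : ((σ → R) → R) →ₗ[R] R where
  toFun f := ∑ γ ∈ Fintype.piFinset fun i => range (b i + 1),
    (∏ i, (-1 : R) ^ (b i - γ i) * (b i).choose (γ i)) * f fun i => γ i
  map_add' f g := by simp only [Pi.add_apply, mul_add, sum_add_distrib]
  map_smul' c f := by
    simp only [Pi.smul_apply, smul_eq_mul, mul_sum, RingHom.id_apply, mul_left_comm]

lemma mixedFwdDiff_apply (b : σ → ℕ) (f : (σ → R) → R) :
    mixedFwdDiff b f = ∑ γ ∈ Fintype.piFinset fun i => range (b i + 1),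
      (∏ i, (-1 : R) ^ (b i - γ i) * (b i).choose (γ i)) * f fun i => γ i := rfl

lemma mixedFwdDiff_prod (b : σ → ℕ) (g : σ → R → R) :
    mixedFwdDiff b (fun x => ∏ i, g i (x i)) = ∏ i, (fwdDiff 1)^[b i] (g i) 0 := by
  simp only [fwdDiff_iter_eq_sum_shift, zero_add, nsmul_one, zsmul_eq_mul, prod_univ_sum,
    mixedFwdDiff_apply, ← prod_mul_distrib]
  push_cast
  rfl

lemma mixedFwdDiff_eval_monomial (b : σ → ℕ) (m : σ →₀ ℕ) (c : R) :
    mixedFwdDiff b (fun x => eval x (monomial m c)) =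
      c * ∏ i, (fwdDiff 1)^[b i] (fun t : R => t ^ m i) 0 := by
  have : (fun x => eval x (monomial m c)) = c • fun x : σ → R => ∏ i, x i ^ m i := by
    ext x; simp [eval_monomial, Finsupp.prod_pow]
  rw [this, map_smul, smul_eq_mul, mixedFwdDiff_prod b fun i t => t ^ m i]

lemma mixedFwdDiff_eval_eq_zero (b : σ → ℕ) (q : MvPolynomial σ R)
    (hq : q.totalDegree < ∑ i, b i) : mixedFwdDiff b (fun x => eval x q) = 0 := by
  have : (fun x => eval x q) = ∑ m ∈ q.support, fun x => eval x (monomial m (coeff m q)) := by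
    ext x; rw [Finset.sum_apply, ← map_sum, ← as_sum]
  rw [this, map_sum]
  refine sum_eq_zero fun m hm => ?_
  obtain ⟨i, hi⟩ : ∃ i, m i < b i := by
    by_contra! h
    have hm' : m.degree ≤ q.totalDegree := le_totalDegree hm
    rw [Finsupp.degree_eq_sum] at hm'
    exact (sum_le_sum fun i _ => h i).not_gt (hm'.trans_lt hq)
  rw [mixedFwdDiff_eval_monomial, prod_eq_zero (mem_univ i), mul_zero]
  rw [fwdDiff_iter_pow_eq_zero_of_lt hi, Pi.zero_apply]

lemma abs_mixedFwdDiff_le (b : σ → ℕ) (f : (σ → ℝ) → ℝ)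
    (hf : ∀ γ : σ → ℕ, (∀ i, γ i ≤ b i) → |f fun i => γ i| ≤ 1) :
    |mixedFwdDiff b f| ≤ 2 ^ ∑ i, b i := by
  rw [mixedFwdDiff_apply]
  refine (abs_sum_le_sum_abs _ _).trans ?_
  calc _ ≤ ∑ γ ∈ Fintype.piFinset fun i => range (b i + 1),
        ∏ i, ((b i).choose (γ i) : ℝ) := by
        refine sum_le_sum fun γ hγ => ?_
        rw [abs_mul, abs_prod]
        refine mul_le_of_le_one_right (by positivity) (hf γ fun i => ?_) |>.trans_eq ?_
        · simpa [Nat.lt_succ_iff] using Fintype.mem_piFinset.mp hγ i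
        · simp
    _ = 2 ^ ∑ i, b i := by
        rw [← prod_univ_sum (fun i => range (b i + 1)) fun i k => ((b i).choose k : ℝ),
          ← prod_pow_eq_pow_sum]
        exact prod_congr rfl fun i _ => by exact_mod_cast Nat.sum_range_choose (b i)

end MixedFwdDiff

section Newton

variable {σ : Type*}

lemma X_pow_eq_sum_smul_prod_range {K : Type*} [Field K] [CharZero K] (i : σ) {g D : ℕ}
    (hg : g ≤ D) :
    (X i : MvPolynomial σ K) ^ g = ∑ k ∈ range (D + 1),
      ((fwdDiff 1)^[k] (fun t : K => t ^ g) 0 / k.factorial) •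
        ∏ j ∈ range k, (X i - (j : MvPolynomial σ K)) := by
  have h := congrArg (Polynomial.aeval (X i : MvPolynomial σ K))
    ((Polynomial.X ^ g : Polynomial K).eq_sum_fwdDiff_iter_smul_descPochhammer
      (D := D) (by rwa [Polynomial.natDegree_X_pow]))
  have heval : (Polynomial.X ^ g : Polynomial K).eval = fun t => t ^ g := by
    ext t; simp
  simpa only [map_pow, Polynomial.aeval_X, map_sum, map_smul, heval,
    Polynomial.aeval_descPochhammer_eq_prod_range] using h

variable [Fintype σ]

def fallingBasis {R : Type*} [CommRing R] (b : σ → ℕ) : MvPolynomial σ R :=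
  ∏ i, ∏ j ∈ range (b i), (X i - (j : MvPolynomial σ R))

lemma coeff_fallingBasis_eq_zero {R : Type*} [CommRing R] {b : σ → ℕ} {m : σ →₀ ℕ}
    {i : σ} (hb : b i ≠ 0) (hm : m i = 0) : coeff m (fallingBasis b : MvPolynomial σ R) = 0 := by
  classical
  obtain ⟨r, hr⟩ : X i ∣ (fallingBasis b : MvPolynomial σ R) := by
    refine (dvd_of_eq ?_).trans ((dvd_prod_of_mem _ (mem_range.mpr (Nat.pos_of_ne_zero hb))).trans
      (dvd_prod_of_mem _ (mem_univ i)))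
    simp
  rw [hr, coeff_X_mul', if_neg (by simpa using hm)]

lemma sumAbsCoeff_fallingBasis_le (b : σ → ℕ) :
    sumAbsCoeff (fallingBasis b : MvPolynomial σ ℝ) ≤ ∏ i, ((b i).factorial : ℝ) := by
  refine (sumAbsCoeff_prod_le _ _).trans
    (prod_le_prod (fun _ _ => sumAbsCoeff_nonneg _) fun i _ => ?_)
  refine (sumAbsCoeff_prod_le _ _).trans ?_
  rw [← prod_range_add_one_eq_factorial, Nat.cast_prod]
  exact prod_le_prod (fun _ _ => sumAbsCoeff_nonneg _)
    fun j _ => (sumAbsCoeff_X_sub_natCast_le i j).trans_eq (by push_cast; ring)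

variable [DecidableEq σ]

def newtonCoeff {K : Type*} [Field K] (b : σ → ℕ) (q : MvPolynomial σ K) : K :=
  mixedFwdDiff b (fun x => eval x q) / ∏ i, ((b i).factorial : K)

lemma newtonCoeff_eq_zero {K : Type*} [Field K] (b : σ → ℕ) (q : MvPolynomial σ K)
    (hq : q.totalDegree < ∑ i, b i) : newtonCoeff b q = 0 := by
  rw [newtonCoeff, mixedFwdDiff_eval_eq_zero b q hq, zero_div]

variable {K : Type*} [Field K] [CharZero K]

lemma monomial_eq_sum_newtonCoeff_smul_fallingBasis (m : σ →₀ ℕ) (c : K) {D : ℕ}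
    (hm : ∀ i, m i ≤ D) :
    monomial m c = ∑ b ∈ Fintype.piFinset fun _ => range (D + 1),
      newtonCoeff b (monomial m c) • fallingBasis b := by
  simp only [newtonCoeff, mixedFwdDiff_eval_monomial]
  rw [monomial_eq, Finsupp.prod_pow,
    prod_congr rfl fun i _ => X_pow_eq_sum_smul_prod_range i (hm i), prod_univ_sum, mul_sum]
  refine sum_congr rfl fun b _ => ?_
  rw [prod_smul, smul_eq_C_mul, smul_eq_C_mul, ← mul_assoc, ← map_mul, fallingBasis,
    prod_div_distrib, mul_div_assoc]

theorem eq_sum_newtonCoeff_smul_fallingBasis (q : MvPolynomial σ K) {D : ℕ}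
    (hq : ∀ i, q.degreeOf i ≤ D) :
    q = ∑ b ∈ Fintype.piFinset fun _ => range (D + 1), newtonCoeff b q • fallingBasis b := by
  have heval : (fun x => eval x q) =
      ∑ m ∈ q.support, fun x => eval x (monomial m (coeff m q)) := by
    ext x; rw [Finset.sum_apply, ← map_sum, ← as_sum]
  conv_lhs => rw [q.as_sum]
  rw [sum_congr rfl fun m hm => monomial_eq_sum_newtonCoeff_smul_fallingBasis m _
    fun i => (monomial_le_degreeOf i hm).trans (hq i), sum_comm]
  simp only [newtonCoeff, heval, map_sum, sum_div, sum_smul]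

end Newton

section GridBound

variable {σ : Type*} [Fintype σ] [DecidableEq σ] {d : ℕ} {q : MvPolynomial σ ℝ}

lemma abs_newtonCoeff_mul_sumAbsCoeff_le (hdeg : q.totalDegree ≤ d)
    (hgrid : ∀ γ : σ → ℕ, (∀ i, γ i ≤ d) → |eval (fun i => (γ i : ℝ)) q| ≤ 1)
    {b : σ → ℕ} (hb : b ∈ Fintype.piFinset fun _ => range (d + 1)) :
    |newtonCoeff b q| * sumAbsCoeff (fallingBasis b) ≤ 2 ^ d := by
  by_cases hsum : ∑ i, b i ≤ d
  · have hbd : ∀ i, b i ≤ d := fun i => by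
      simpa [Nat.lt_succ_iff] using Fintype.mem_piFinset.mp hb i
    have hfact : (0 : ℝ) < ∏ i, ((b i).factorial : ℝ) := by positivity
    calc |newtonCoeff b q| * sumAbsCoeff (fallingBasis b)
        ≤ |mixedFwdDiff b fun x => eval x q| / (∏ i, ((b i).factorial : ℝ)) *
            ∏ i, ((b i).factorial : ℝ) := by
          rw [newtonCoeff, abs_div, abs_of_pos hfact]
          exact mul_le_mul_of_nonneg_left (sumAbsCoeff_fallingBasis_le b) (by positivity)
      _ = |mixedFwdDiff b fun x => eval x q| := div_mul_cancel₀ _ hfact.ne'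
      _ ≤ 2 ^ ∑ i, b i :=
          abs_mixedFwdDiff_le b _ fun γ hγ => hgrid γ fun i => (hγ i).trans (hbd i)
      _ ≤ 2 ^ d := pow_le_pow_right₀ one_le_two hsum
  · rw [newtonCoeff_eq_zero b q (by omega), abs_zero, zero_mul]
    positivity

theorem sumAbsCoeff_le_of_abs_eval_grid_le (hdeg : q.totalDegree ≤ d)
    (hgrid : ∀ γ : σ → ℕ, (∀ i, γ i ≤ d) → |eval (fun i => (γ i : ℝ)) q| ≤ 1) :
    sumAbsCoeff q ≤ 2 ^ d * ((d + 1) * (Fintype.card σ + d) ^ d) := by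
  set box := Fintype.piFinset fun _ : σ => range (d + 1)
  have hnewton := eq_sum_newtonCoeff_smul_fallingBasis q
    fun i => (degreeOf_le_totalDegree q i).trans hdeg
  calc sumAbsCoeff q
      ≤ ∑ b ∈ box, |newtonCoeff b q| * sumAbsCoeff (fallingBasis b) := by
        conv_lhs => rw [hnewton]
        exact (sumAbsCoeff_sum_le _ _).trans_eq (sum_congr rfl fun b _ => sumAbsCoeff_smul _ _)
    _ = ∑ b ∈ box with ∑ i, b i ≤ d, |newtonCoeff b q| * sumAbsCoeff (fallingBasis b) :=
        (sum_filter_of_ne fun b _ hne => not_lt.mp fun h => hne (by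
          rw [newtonCoeff_eq_zero b q (hdeg.trans_lt h), abs_zero, zero_mul])).symm
    _ ≤ #{b ∈ box | ∑ i, b i ≤ d} • (2 : ℝ) ^ d :=
        sum_le_card_nsmul _ _ _ fun b hb =>
          abs_newtonCoeff_mul_sumAbsCoeff_le hdeg hgrid (mem_filter.mp hb).1
    _ ≤ 2 ^ d * ((d + 1) * (Fintype.card σ + d) ^ d) := by
        rw [nsmul_eq_mul, mul_comm]
        gcongr
        exact_mod_cast card_piFinset_filter_sum_le d

theorem abs_coeff_le_of_abs_eval_grid_le (hdeg : q.totalDegree ≤ d)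
    (hgrid : ∀ γ : σ → ℕ, (∀ i, γ i ≤ d) → |eval (fun i => (γ i : ℝ)) q| ≤ 1)
    (m : σ →₀ ℕ) :
    |coeff m q| ≤ 2 ^ d * (d + 1) ^ #m.support := by
  set box := Fintype.piFinset fun _ : σ => range (d + 1)
  -- only `b` supported in `m.support` contribute, as `X i ∣ fallingBasis b` when `b i ≠ 0`
  set S := Fintype.piFinset fun i => if i ∈ m.support then range (d + 1) else {0}
  have hS : S ⊆ box := fun b hb => Fintype.mem_piFinset.mpr fun i => by
    have := Fintype.mem_piFinset.mp hb i
    split_ifs at this <;> simp_all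
  have hcoeff := congrArg (coeff m) (eq_sum_newtonCoeff_smul_fallingBasis q
    fun i => (degreeOf_le_totalDegree q i).trans hdeg)
  simp only [coeff_sum, coeff_smul, smul_eq_mul] at hcoeff
  rw [hcoeff, ← sum_subset hS fun b hb hbS => ?_]
  · calc |∑ b ∈ S, newtonCoeff b q * coeff m (fallingBasis b)|
        ≤ ∑ b ∈ S, |newtonCoeff b q| * sumAbsCoeff (fallingBasis b) :=
          (abs_sum_le_sum_abs _ _).trans (sum_le_sum fun b _ => by
            rw [abs_mul]
            exact mul_le_mul_of_nonneg_left (abs_coeff_le_sumAbsCoeff _ _) (abs_nonneg _))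
      _ ≤ #S • (2 : ℝ) ^ d :=
          sum_le_card_nsmul _ _ _ fun b hb =>
            abs_newtonCoeff_mul_sumAbsCoeff_le hdeg hgrid (hS hb)
      _ = 2 ^ d * (d + 1) ^ #m.support := by
          rw [card_piFinset_ite_mem, nsmul_eq_mul, mul_comm]; push_cast; rfl
  · obtain ⟨i, hi⟩ : ∃ i, b i ∉ if i ∈ m.support then range (d + 1) else {0} := by
      simpa [S, Fintype.mem_piFinset] using hbS
    have hmi : m i = 0 := by
      by_contra h
      exact hi (by simpa [Finsupp.mem_support_iff.mpr h] using Fintype.mem_piFinset.mp hb i)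
    rw [coeff_fallingBasis_eq_zero (by simpa [hmi] using hi) hmi, mul_zero]

end GridBound

section Cube

variable {σ : Type*} {d : ℕ} {p : MvPolynomial σ ℝ}

lemma abs_eval_rescale_grid_le
    (hcube : ∀ x : σ → ℝ, (∀ i, x i ∈ Set.Icc (0 : ℝ) 1) → |eval x p| ≤ 1)
    (γ : σ → ℕ) (hγ : ∀ i, γ i ≤ d) :
    |eval (fun i => (γ i : ℝ)) (rescale (d : ℝ)⁻¹ p)| ≤ 1 := by
  rw [eval_rescale]
  refine hcube _ fun i => ⟨by positivity, ?_⟩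
  rcases Nat.eq_zero_or_pos d with rfl | hd
  · simp
  rw [inv_mul_le_one₀ (by positivity)]
  exact_mod_cast hγ i

variable [Fintype σ]

lemma coeff_eq_pow_mul_coeff_rescale (hd : d ≠ 0) (m : σ →₀ ℕ) :
    coeff m p = (d : ℝ) ^ m.degree * coeff m (rescale (d : ℝ)⁻¹ p) := by
  rw [coeff_rescale, ← mul_assoc, ← mul_pow, mul_inv_cancel₀ (by positivity), one_pow,
    one_mul]

variable [DecidableEq σ]

theorem abs_coeff_le_of_abs_eval_cube_le (hd : d ≠ 0) (hdeg : p.totalDegree ≤ d)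
    (hcube : ∀ x : σ → ℝ, (∀ i, x i ∈ Set.Icc (0 : ℝ) 1) → |eval x p| ≤ 1)
    (m : σ →₀ ℕ) :
    |coeff m p| ≤ (2 * d : ℝ) ^ d * (d + 1) ^ d := by
  by_cases hm : m ∈ p.support
  · have hmd : m.degree ≤ d := (le_totalDegree hm).trans hdeg
    have hq := abs_coeff_le_of_abs_eval_grid_le
      ((totalDegree_le_of_support_subset (support_rescale_subset _ p)).trans hdeg)
      (abs_eval_rescale_grid_le hcube) m
    have hd1 : (1 : ℝ) ≤ d := by exact_mod_cast Nat.one_le_iff_ne_zero.mpr hd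
    calc |coeff m p|
        = (d : ℝ) ^ m.degree * |coeff m (rescale (d : ℝ)⁻¹ p)| := by
          rw [coeff_eq_pow_mul_coeff_rescale hd, abs_mul, abs_of_nonneg (by positivity)]
      _ ≤ (d : ℝ) ^ d * (2 ^ d * (d + 1) ^ d) :=
          mul_le_mul (pow_le_pow_right₀ hd1 hmd) (hq.trans (mul_le_mul_of_nonneg_left
            (pow_le_pow_right₀ (by linarith) ((Finsupp.card_support_le_degree m).trans hmd))
            (by positivity))) (abs_nonneg _) (by positivity)
      _ = (2 * d : ℝ) ^ d * (d + 1) ^ d := by ring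
  · rw [notMem_support_iff.mp hm, abs_zero]
    positivity

theorem sumAbsCoeff_le_of_abs_eval_cube_le (hd : d ≠ 0) (hdeg : p.totalDegree ≤ d)
    (hcube : ∀ x : σ → ℝ, (∀ i, x i ∈ Set.Icc (0 : ℝ) 1) → |eval x p| ≤ 1) :
    sumAbsCoeff p ≤ (2 * d : ℝ) ^ d * ((d + 1) * (Fintype.card σ + d) ^ d) := by
  set q := rescale (d : ℝ)⁻¹ p
  have hd1 : (1 : ℝ) ≤ d := by exact_mod_cast Nat.one_le_iff_ne_zero.mpr hd
  have hq := sumAbsCoeff_le_of_abs_eval_grid_le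
    ((totalDegree_le_of_support_subset (support_rescale_subset _ p)).trans hdeg)
    (abs_eval_rescale_grid_le hcube)
  calc sumAbsCoeff p = ∑ m ∈ p.support, (d : ℝ) ^ m.degree * |coeff m q| := by
        refine sum_congr rfl fun m _ => ?_
        rw [coeff_eq_pow_mul_coeff_rescale hd, abs_mul, abs_of_nonneg (by positivity)]
    _ ≤ ∑ m ∈ p.support, (d : ℝ) ^ d * |coeff m q| := sum_le_sum fun m hm =>
        mul_le_mul_of_nonneg_right (pow_le_pow_right₀ hd1 ((le_totalDegree hm).trans hdeg))
          (abs_nonneg _)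
    _ = (d : ℝ) ^ d * sumAbsCoeff q := by
        rw [← mul_sum, sumAbsCoeff_eq_sum_of_support_subset q (support_rescale_subset _ p)]
    _ ≤ (d : ℝ) ^ d * (2 ^ d * ((d + 1) * (Fintype.card σ + d) ^ d)) := by gcongr
    _ = (2 * d : ℝ) ^ d * ((d + 1) * (Fintype.card σ + d) ^ d) := by ring

end Cube

end MvPolynomial

/-- coefficient bounds for polynomials bounded on the unit cube. -/
theorem stmt19 (n d : ℕ) (hd : 1 ≤ d) (p : MvPolynomial (Fin n) ℝ)
    (hdeg : p.totalDegree ≤ d)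
    (hbound : ∀ x : Fin n → ℝ, (∀ i, x i ∈ Set.Icc (0:ℝ) 1) →
      |MvPolynomial.eval x p| ≤ 1) :
    (∀ m, |MvPolynomial.coeff m p| ≤ ((2 * d : ℕ) : ℝ) ^ (3 * d)) ∧
    (∑ m ∈ p.support, |MvPolynomial.coeff m p|) ≤ ((2 * (n + d) : ℕ) : ℝ) ^ (3 * d) := by
  have hd0 : d ≠ 0 := by omega
  refine ⟨fun m => (abs_coeff_le_of_abs_eval_cube_le hd0 hdeg hbound m).trans ?_,
    (sumAbsCoeff_le_of_abs_eval_cube_le hd0 hdeg hbound).trans ?_⟩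
  · exact_mod_cast pow_mul_pow_le_pow_three_mul hd
  · rw [Fintype.card_fin]
    exact_mod_cast pow_mul_mul_pow_le_pow_three_mul hd

end
end
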